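/- Let α ∈ (0,1], β > α, γ = αβ/(β−α), c > 0, and let f : 𝒳 → ℝ be measurable. Define h(x) = log E_x exp( c^{−γ} |Z_0(f)|^γ ). Assume there exist a measurable function V : 𝒳 → [0,∞), a set C ∈ ℬ and constants b > 0, K > 0 such that V(x) ≤ K for all x ∈ C and, for every x ∈ 𝒳, (P^m V)(x) − V(x) ≤ −exp(h(x)) + b·1_C(x), where P^m is the m-step transition kernel. Then sup_{x∈C} ‖ Σ_{k=0}^{τ_C−1} |Z_k(f)| ‖_{ψ_α, P_x} ≤ c_1 · c_2, where c_1 = sup_{x∈C} ‖τ_C‖_{ψ_β, P_x} and c_2 = c·( max( log(b+K)/log 2 , 1 ) )^{1/γ}, the inequality being interpreted in [0,∞]. -/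

import Mathlib

/-! Write `T = Σ_{k<τ_C} exp(|Z_k(f)|^γ / c^γ)` and `M = max(log(b+K)/log 2, 1)`. Pointwise,
`Σ_{k<τ_C} |Z_k(f)| ≤ τ_C · max_k |Z_k(f)|` and `max_k |Z_k(f)|^γ ≤ c^γ log T`, so Young's
inequality for the conjugate exponents `β/α`, `γ/α` gives
`exp((Σ_{k<τ_C} |Z_k(f)| / (r c M^{1/γ}))^α) ≤ exp((τ_C/r)^β)^{α/β} · T^{α/(γM)}`.
Hölder's inequality with the same exponents then reduces the claim to
`E_x exp((τ_C/r)^β) ≤ 2` and `E_x T^{1/M} ≤ (E_x T)^{1/M} ≤ 2`. By the Markov property at the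
skeleton times `km`, `E_x T = E_x Σ_{k<τ_C} e^{h(X_{km})}`, and the comparison theorem for the
drift condition bounds this by `e^{h(x)} + P^m V(x) ≤ V(x) + b ≤ K + b ≤ 2^M` for `x ∈ C`. -/

open MeasureTheory ProbabilityTheory Real
open scoped ENNReal

/-- Prepend a point to a trajectory. -/
def prependPath {𝒳 : Type*} (x : 𝒳) (ω : ℕ → 𝒳) : ℕ → 𝒳 :=
  fun n => Nat.casesOn n x fun k => ω k

/-- `Z_k(f) = Σ_{j=0}^{m−1} f(X_{km+j})` evaluated on a trajectory. -/
noncomputable def pathZ {𝒳 : Type*} (m : ℕ) (f : 𝒳 → ℝ) (k : ℕ) (ω : ℕ → 𝒳) : ℝ :=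
  ∑ j ∈ Finset.range m, f (ω (k * m + j))

/-- The first return time `τ_C = inf{k ≥ 1 : X_{km} ∈ C}` of the `m`-skeleton to `C`,
with values in `[0,∞]` (`inf ∅ = ∞`). -/
noncomputable def pathTau {𝒳 : Type*} (m : ℕ) (C : Set 𝒳) (ω : ℕ → 𝒳) : ℝ≥0∞ :=
  sInf {c : ℝ≥0∞ | ∃ j : ℕ, c = j ∧ 1 ≤ j ∧ ω (j * m) ∈ C}

/-- `Σ_{k=0}^{τ−1} u_k`, interpreted in `[0,∞]`. -/
noncomputable def sumBefore (τ : ℝ≥0∞) (u : ℕ → ℝ≥0∞) : ℝ≥0∞ :=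
  ∑' k : ℕ, if (k : ℝ≥0∞) < τ then u k else 0

/-- The exponential function on `[0,∞]`, with `exp ∞ = ∞`. -/
noncomputable def expE (y : ℝ≥0∞) : ℝ≥0∞ :=
  if y = ⊤ then ⊤ else ENNReal.ofReal (Real.exp y.toReal)

/-- The exponential Orlicz norm `‖Y‖_{ψ_α,Q}` of a `[0,∞]`-valued variable
(with `inf ∅ = ∞`). -/
noncomputable def psiNormE {Ω : Type*} [MeasurableSpace Ω] (Q : Measure Ω) (α : ℝ)
    (Y : Ω → ℝ≥0∞) : ℝ≥0∞ :=
  sInf {c : ℝ≥0∞ | ∃ r : ℝ, 0 < r ∧ c = ENNReal.ofReal r ∧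
    ∫⁻ ω, expE (Y ω ^ α / ENNReal.ofReal (r ^ α)) ∂Q ≤ 2}

def shiftPath {𝒳 : Type*} (N : ℕ) (ω : ℕ → 𝒳) : ℕ → 𝒳 :=
  fun i => ω (N + i)

section Paths

variable {𝒳 : Type*}

theorem shiftPath_zero (ω : ℕ → 𝒳) : shiftPath 0 ω = ω :=
  funext fun i => congrArg ω (Nat.zero_add i)

theorem shiftPath_succ_prependPath (N : ℕ) (x : 𝒳) (ω : ℕ → 𝒳) :
    shiftPath (N + 1) (prependPath x ω) = shiftPath N ω :=
  funext fun i => by rw [shiftPath, Nat.add_right_comm]; rfl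

theorem pathZ_eq_pathZ_shiftPath (m : ℕ) (f : 𝒳 → ℝ) (k : ℕ) (ω : ℕ → 𝒳) :
    pathZ m f k ω = pathZ m f 0 (shiftPath (k * m) ω) := by
  simp only [pathZ, shiftPath, Nat.zero_mul, Nat.zero_add]

theorem lt_pathTau_iff {m k : ℕ} {C : Set 𝒳} {ω : ℕ → 𝒳} :
    (k : ℝ≥0∞) < pathTau m C ω ↔ ∀ j, 1 ≤ j → j ≤ k → ω (j * m) ∉ C := by
  constructor
  · intro hk j hj hjk hjC
    have : pathTau m C ω ≤ j := sInf_le ⟨j, rfl, hj, hjC⟩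
    exact (this.trans (Nat.cast_le.2 hjk)).not_gt hk
  · intro h
    refine (Nat.cast_lt.2 k.lt_succ_self).trans_le (le_sInf ?_)
    rintro _ ⟨j, rfl, hj, hjC⟩
    exact Nat.cast_le.2 (by by_contra! hjk; exact h j hj (by omega) hjC)

theorem lt_pathTau_of_forall_le_eq {m k : ℕ} {C : Set 𝒳} {ω ω' : ℕ → 𝒳}
    (h : ∀ i ≤ k * m, ω i = ω' i) (hk : (k : ℝ≥0∞) < pathTau m C ω) :
    (k : ℝ≥0∞) < pathTau m C ω' := by
  rw [lt_pathTau_iff] at hk ⊢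
  intro j hj hjk
  rw [← h _ (Nat.mul_le_mul_right m hjk)]
  exact hk j hj hjk

theorem exists_pathTau_eq_natCast {m : ℕ} {C : Set 𝒳} {ω : ℕ → 𝒳} (hτ : pathTau m C ω ≠ ⊤) :
    ∃ n : ℕ, 1 ≤ n ∧ pathTau m C ω = n := by
  classical
  have hex : ∃ j, 1 ≤ j ∧ ω (j * m) ∈ C := by
    by_contra hne
    refine hτ (sInf_eq_top.2 ?_)
    rintro _ ⟨j, rfl, hj⟩
    exact absurd ⟨j, hj⟩ hne
  refine ⟨Nat.find hex, (Nat.find_spec hex).1,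
    le_antisymm (sInf_le ⟨_, rfl, Nat.find_spec hex⟩) (le_sInf ?_)⟩
  rintro _ ⟨j, rfl, hj⟩
  exact Nat.cast_le.2 (Nat.find_min' hex hj)

open Classical in
theorem pathTau_eq_iInf (m : ℕ) (C : Set 𝒳) (ω : ℕ → 𝒳) :
    pathTau m C ω = ⨅ j : ℕ, if 1 ≤ j ∧ ω (j * m) ∈ C then (j : ℝ≥0∞) else ⊤ := by
  refine le_antisymm (le_iInf fun j => ?_) (le_sInf ?_)
  · split_ifs with hj
    exacts [sInf_le ⟨j, rfl, hj⟩, le_top]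
  · rintro _ ⟨j, rfl, hj⟩
    exact iInf_le_of_le j (if_pos hj).le

variable [MeasurableSpace 𝒳]

theorem measurable_prependPath (x : 𝒳) : Measurable (prependPath x) :=
  measurable_pi_lambda _ fun n => by
    cases n with
    | zero => exact measurable_const
    | succ k => exact measurable_pi_apply k

theorem measurable_shiftPath (N : ℕ) : Measurable (shiftPath (𝒳 := 𝒳) N) :=
  measurable_pi_lambda _ fun _ => measurable_pi_apply _

theorem measurable_pathZ (m : ℕ) {f : 𝒳 → ℝ} (hf : Measurable f) (k : ℕ) :
    Measurable (pathZ m f k) :=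
  Finset.measurable_sum _ fun _ _ => hf.comp (measurable_pi_apply _)

theorem measurable_pathTau (m : ℕ) {C : Set 𝒳} (hC : MeasurableSet C) :
    Measurable (pathTau m C) := by
  rw [funext (pathTau_eq_iInf m C)]
  exact Measurable.iInf fun j => Measurable.ite
    ((MeasurableSet.const (1 ≤ j)).inter (measurable_pi_apply _ hC)) measurable_const
    measurable_const

end Paths

theorem sumBefore_natCast (n : ℕ) (u : ℕ → ℝ≥0∞) :
    sumBefore n u = ∑ k ∈ Finset.range n, u k := by
  rw [sumBefore, tsum_eq_sum (s := Finset.range n) fun k hk => if_neg (by simpa using hk)]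
  exact Finset.sum_congr rfl fun k hk => if_pos (by simpa using hk)

theorem measurable_sumBefore {Ω : Type*} [MeasurableSpace Ω] {τ : Ω → ℝ≥0∞} (hτ : Measurable τ)
    {u : ℕ → Ω → ℝ≥0∞} (hu : ∀ k, Measurable (u k)) :
    Measurable fun ω => sumBefore (τ ω) fun k => u k ω :=
  Measurable.tsum fun k =>
    (hu k).ite (measurableSet_lt measurable_const hτ) measurable_const

theorem lintegral_sumBefore {Ω : Type*} [MeasurableSpace Ω] (μ : Measure Ω) {τ : Ω → ℝ≥0∞}
    (hτ : Measurable τ) {u : ℕ → Ω → ℝ≥0∞} (hu : ∀ k, Measurable (u k)) :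
    ∫⁻ ω, sumBefore (τ ω) (fun k => u k ω) ∂μ
      = ∑' k : ℕ, ∫⁻ ω in {ω | (k : ℝ≥0∞) < τ ω}, u k ω ∂μ := by
  have hs (k : ℕ) : MeasurableSet {ω | (k : ℝ≥0∞) < τ ω} := measurableSet_lt measurable_const hτ
  simp only [sumBefore]
  rw [lintegral_tsum fun k => ((hu k).ite (hs k) measurable_const).aemeasurable]
  refine tsum_congr fun k => ?_
  rw [← lintegral_indicator (hs k)]
  simp only [Set.indicator_apply, Set.mem_ofPred_eq]

section MarkovProperty

variable {𝒳 : Type*} [MeasurableSpace 𝒳] {κ : Kernel 𝒳 𝒳} {Pa : 𝒳 → Measure (ℕ → 𝒳)}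
  (hPa_meas : Measurable Pa)
  (hPa : ∀ x, Pa x = (κ x).bind fun y => (Pa y).map (prependPath x))
include hPa_meas hPa

theorem setLIntegral_eq_lintegral_setLIntegral_prependPath {s : Set (ℕ → 𝒳)}
    (hs : MeasurableSet s) {H : (ℕ → 𝒳) → ℝ≥0∞} (hH : Measurable H) (x : 𝒳) :
    ∫⁻ ω in s, H ω ∂Pa x = ∫⁻ y, ∫⁻ ω in prependPath x ⁻¹' s, H (prependPath x ω) ∂Pa y ∂κ x := by
  have hmap : Measurable fun y => (Pa y).map (prependPath x) :=
    (Measure.measurable_map _ (measurable_prependPath x)).comp hPa_meas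
  rw [← lintegral_indicator hs, hPa x,
    Measure.lintegral_bind hmap.aemeasurable (hH.indicator hs).aemeasurable]
  refine lintegral_congr fun y => ?_
  rw [lintegral_map (hH.indicator hs) (measurable_prependPath x),
    ← lintegral_indicator (measurable_prependPath x hs)]
  rfl

-- Singletons of `𝒳` need not be measurable, so `X_0 = x` a.s. is only available in this form.
theorem ae_mem_of_forall_prependPath_mem {s : Set (ℕ → 𝒳)} (hs : MeasurableSet s) {x : 𝒳}
    (h : ∀ ω, prependPath x ω ∈ s) : ∀ᵐ ω ∂Pa x, ω ∈ s := by
  have hempty : prependPath x ⁻¹' sᶜ = ∅ := Set.eq_empty_of_forall_notMem fun ω hω => hω (h ω)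
  change Pa x sᶜ = 0
  rw [← setLIntegral_one,
    setLIntegral_eq_lintegral_setLIntegral_prependPath hPa_meas hPa hs.compl measurable_const]
  simp [hempty]

variable [∀ x, IsProbabilityMeasure (Pa x)]

theorem lintegral_comp_apply_zero {g : 𝒳 → ℝ≥0∞} (hg : Measurable g) (x : 𝒳) :
    ∫⁻ ω, g (ω 0) ∂Pa x = g x := by
  have : ∀ᵐ ω ∂Pa x, g (ω 0) = g x :=
    ae_mem_of_forall_prependPath_mem hPa_meas hPa
      (hg.comp (measurable_pi_apply 0) (measurableSet_singleton (g x))) fun _ => rfl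
  rw [lintegral_congr_ae this, lintegral_const, measure_univ, mul_one]

theorem setLIntegral_comp_shiftPath (N : ℕ) {s : Set (ℕ → 𝒳)} (hs : MeasurableSet s)
    (hsN : ∀ ω ω', (∀ i ≤ N, ω i = ω' i) → ω ∈ s → ω' ∈ s)
    {G : (ℕ → 𝒳) → ℝ≥0∞} (hG : Measurable G) (x : 𝒳) :
    ∫⁻ ω in s, G (shiftPath N ω) ∂Pa x = ∫⁻ ω in s, ∫⁻ ω', G ω' ∂Pa (ω N) ∂Pa x := by
  have hPG : Measurable fun y => ∫⁻ ω', G ω' ∂Pa y :=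
    (Measure.measurable_lintegral hG).comp hPa_meas
  induction N generalizing s x with
  | zero =>
    have hsx (ω : ℕ → 𝒳) : prependPath x ω ∈ s ↔ (fun _ => x) ∈ s :=
      ⟨hsN _ _ fun i hi => by rw [Nat.le_zero.1 hi]; rfl,
        hsN _ _ fun i hi => by rw [Nat.le_zero.1 hi]; rfl⟩
    by_cases hx : (fun _ => x) ∈ s
    · rw [Measure.restrict_eq_self_of_ae_mem
        (ae_mem_of_forall_prependPath_mem hPa_meas hPa hs fun ω => (hsx ω).2 hx),
        lintegral_comp_apply_zero hPa_meas hPa hPG]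
      simp only [shiftPath_zero]
    · have : Pa x s = 0 := measure_eq_zero_iff_ae_notMem.2
        (ae_mem_of_forall_prependPath_mem hPa_meas hPa hs.compl fun ω => mt (hsx ω).1 hx)
      simp [Measure.restrict_eq_zero.2 this]
  | succ N ih =>
    rw [setLIntegral_eq_lintegral_setLIntegral_prependPath hPa_meas hPa hs
        (H := fun ω => G (shiftPath (N + 1) ω)) (hG.comp (measurable_shiftPath _)),
      setLIntegral_eq_lintegral_setLIntegral_prependPath hPa_meas hPa hs
        (H := fun ω => ∫⁻ ω', G ω' ∂Pa (ω (N + 1))) (hPG.comp (measurable_pi_apply _))]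
    refine lintegral_congr fun y => ?_
    simp only [shiftPath_succ_prependPath]
    refine ih (measurable_prependPath x hs) (fun ω ω' h => hsN _ _ fun i hi => ?_) y
    cases i with
    | zero => rfl
    | succ i => exact h i (by omega)

theorem lintegral_sumBefore_comp_shiftPath {m : ℕ} {C : Set 𝒳} (hC : MeasurableSet C)
    {G : (ℕ → 𝒳) → ℝ≥0∞} (hG : Measurable G) (x : 𝒳) :
    ∫⁻ ω, sumBefore (pathTau m C ω) (fun k => G (shiftPath (k * m) ω)) ∂Pa x
      = ∫⁻ ω, sumBefore (pathTau m C ω) (fun k => ∫⁻ ω', G ω' ∂Pa (ω (k * m))) ∂Pa x := by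
  have hPG : Measurable fun y => ∫⁻ ω', G ω' ∂Pa y :=
    (Measure.measurable_lintegral hG).comp hPa_meas
  rw [lintegral_sumBefore _ (measurable_pathTau m hC) (u := fun k ω => G (shiftPath (k * m) ω))
      fun k => hG.comp (measurable_shiftPath _),
    lintegral_sumBefore _ (measurable_pathTau m hC) (u := fun k ω => ∫⁻ ω', G ω' ∂Pa (ω (k * m)))
      fun k => hPG.comp (measurable_pi_apply _)]
  exact tsum_congr fun k => setLIntegral_comp_shiftPath hPa_meas hPa (k * m)
    (measurableSet_lt measurable_const (measurable_pathTau m hC))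
    (fun _ _ => lt_pathTau_of_forall_le_eq) hG x

theorem setLIntegral_add_setLIntegral_le_of_drift {m : ℕ} {C : Set 𝒳} (hC : MeasurableSet C)
    {g V : 𝒳 → ℝ≥0∞} (hg : Measurable g) (hV : Measurable V)
    (hdrift : ∀ y ∉ C, ∫⁻ ω, V (ω m) ∂Pa y + g y ≤ V y) (x : 𝒳) (n : ℕ) :
    ∫⁻ ω in {ω | ((n + 1 : ℕ) : ℝ≥0∞) < pathTau m C ω}, g (ω ((n + 1) * m)) ∂Pa x
      + ∫⁻ ω in {ω | ((n + 1 : ℕ) : ℝ≥0∞) < pathTau m C ω}, V (ω ((n + 2) * m)) ∂Pa x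
      ≤ ∫⁻ ω in {ω | (n : ℝ≥0∞) < pathTau m C ω}, V (ω ((n + 1) * m)) ∂Pa x := by
  have hmarkov : ∫⁻ ω in {ω | ((n + 1 : ℕ) : ℝ≥0∞) < pathTau m C ω}, V (ω ((n + 2) * m)) ∂Pa x
      = ∫⁻ ω in {ω | ((n + 1 : ℕ) : ℝ≥0∞) < pathTau m C ω},
          ∫⁻ ω', V (ω' m) ∂Pa (ω ((n + 1) * m)) ∂Pa x := by
    rw [← setLIntegral_comp_shiftPath hPa_meas hPa ((n + 1) * m)
      (measurableSet_lt measurable_const (measurable_pathTau m hC))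
      (fun _ _ => lt_pathTau_of_forall_le_eq) (G := fun ω' => V (ω' m))
      (hV.comp (measurable_pi_apply m)) x]
    congr 1
    funext ω
    rw [shiftPath]
    congr 2
    ring
  rw [hmarkov, ← lintegral_add_left (f := fun ω : ℕ → 𝒳 => g (ω ((n + 1) * m)))
    (hg.comp (measurable_pi_apply _))]
  calc _ ≤ ∫⁻ ω in {ω | ((n + 1 : ℕ) : ℝ≥0∞) < pathTau m C ω}, V (ω ((n + 1) * m)) ∂Pa x :=
        setLIntegral_mono (hV.comp (measurable_pi_apply _)) fun ω hω => by
          rw [add_comm]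
          exact hdrift _ (lt_pathTau_iff.1 hω (n + 1) (by omega) le_rfl)
    _ ≤ _ := lintegral_mono_set fun ω (hω : _ < _) =>
        (Nat.cast_lt.2 n.lt_succ_self).trans (α := ℝ≥0∞) hω

/-- The comparison theorem of Meyn and Tweedie, for the `m`-skeleton up to its return to `C`. -/
theorem lintegral_sumBefore_le {m : ℕ} {C : Set 𝒳} (hC : MeasurableSet C)
    {g V : 𝒳 → ℝ≥0∞} (hg : Measurable g) (hV : Measurable V)
    (hdrift : ∀ y ∉ C, ∫⁻ ω, V (ω m) ∂Pa y + g y ≤ V y) (x : 𝒳) :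
    ∫⁻ ω, sumBefore (pathTau m C ω) (fun k => g (ω (k * m))) ∂Pa x
      ≤ g x + ∫⁻ ω, V (ω m) ∂Pa x := by
  set E : ℕ → Set (ℕ → 𝒳) := fun k => {ω | (k : ℝ≥0∞) < pathTau m C ω}
  have key (n : ℕ) : ∑ k ∈ Finset.range (n + 1), ∫⁻ ω in E k, g (ω (k * m)) ∂Pa x
      + ∫⁻ ω in E n, V (ω ((n + 1) * m)) ∂Pa x ≤ g x + ∫⁻ ω, V (ω m) ∂Pa x := by
    induction n with
    | zero =>
      have hE0 : E 0 = Set.univ := Set.eq_univ_of_forall fun ω =>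
        lt_pathTau_iff.2 fun j hj hj0 => absurd hj (by omega)
      simp [hE0, lintegral_comp_apply_zero hPa_meas hPa hg]
    | succ n ih =>
      rw [Finset.sum_range_succ, add_assoc]
      exact (add_le_add le_rfl (setLIntegral_add_setLIntegral_le_of_drift hPa_meas hPa hC hg hV
        hdrift x n)).trans ih
  rw [lintegral_sumBefore _ (measurable_pathTau m hC) (u := fun k ω => g (ω (k * m)))
    fun k => hg.comp (measurable_pi_apply _)]
  refine ENNReal.tsum_le_of_sum_range_le fun n => ?_
  cases n with
  | zero => simp
  | succ n => exact le_self_add.trans (key n)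

theorem lintegral_sumBefore_exp_le {m : ℕ} {f : 𝒳 → ℝ} (hf : Measurable f) {γ c : ℝ}
    {h V : 𝒳 → ℝ}
    (hh : ∀ x, ∫⁻ ω, ENNReal.ofReal (exp (|pathZ m f 0 ω| ^ γ / c ^ γ)) ∂Pa x
      = ENNReal.ofReal (exp (h x)))
    (hVm : Measurable V) {C : Set 𝒳} (hC : MeasurableSet C) {b : ℝ}
    (hdrift : ∀ x, ∫⁻ ω, ENNReal.ofReal (V (ω m)) ∂Pa x + ENNReal.ofReal (exp (h x))
      ≤ ENNReal.ofReal (V x + b * C.indicator (fun _ => 1) x)) (x : 𝒳) :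
    ∫⁻ ω, sumBefore (pathTau m C ω)
        (fun k => ENNReal.ofReal (exp (|pathZ m f k ω| ^ γ / c ^ γ))) ∂Pa x
      ≤ ENNReal.ofReal (V x + b * C.indicator (fun _ => 1) x) := by
  set G : (ℕ → 𝒳) → ℝ≥0∞ := fun ω => ENNReal.ofReal (exp (|pathZ m f 0 ω| ^ γ / c ^ γ))
  have hG : Measurable G := ENNReal.measurable_ofReal.comp (Real.measurable_exp.comp
    (((measurable_pathZ m hf 0).abs.pow_const γ).div_const _))
  calc _ = ∫⁻ ω, sumBefore (pathTau m C ω) (fun k => G (shiftPath (k * m) ω)) ∂Pa x := by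
        simp only [G, ← pathZ_eq_pathZ_shiftPath]
    _ = ∫⁻ ω, sumBefore (pathTau m C ω) (fun k => ∫⁻ ω', G ω' ∂Pa (ω (k * m))) ∂Pa x :=
        lintegral_sumBefore_comp_shiftPath hPa_meas hPa hC hG x
    _ ≤ ∫⁻ ω, G ω ∂Pa x + ∫⁻ ω, ENNReal.ofReal (V (ω m)) ∂Pa x :=
        lintegral_sumBefore_le hPa_meas hPa hC ((Measure.measurable_lintegral hG).comp hPa_meas)
          (ENNReal.measurable_ofReal.comp hVm)
          (fun y hy => by simpa [G, hh, Set.indicator_of_notMem hy] using hdrift y) x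
    _ ≤ _ := by
        rw [add_comm, hh]
        exact hdrift x

end MarkovProperty

section Orlicz

variable {α β γ : ℝ}

theorem holderConjugate_div_div (hα : 0 < α) (hβ : α < β) (hsum : α / β + α / γ = 1) :
    (β / α).HolderConjugate (γ / α) :=
  Real.holderConjugate_iff.2 ⟨(one_lt_div hα).2 hβ, by rwa [inv_div, inv_div]⟩

theorem pos_of_div_add_div_eq_one (hα : 0 < α) (hβ : α < β) (hsum : α / β + α / γ = 1) :
    0 < γ :=
  (div_pos_iff_of_pos_right hα).1 (holderConjugate_div_div hα hβ hsum).symm.pos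

theorem mul_rpow_le_add_rpow {u v : ℝ} (hu : 0 ≤ u) (hv : 0 ≤ v) (hα : 0 < α) (hβ : α < β)
    (hsum : α / β + α / γ = 1) :
    (u * v) ^ α ≤ α / β * u ^ β + α / γ * v ^ γ := by
  have h := Real.young_inequality_of_nonneg (Real.rpow_nonneg hu α) (Real.rpow_nonneg hv α)
    (holderConjugate_div_div hα hβ hsum)
  rw [← Real.rpow_mul hu, ← Real.rpow_mul hv, mul_div_cancel₀ _ hα.ne',
    mul_div_cancel₀ _ hα.ne'] at h
  rw [Real.mul_rpow hu hv]
  convert h using 2 <;> field_simp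

theorem exp_sum_abs_rpow_div_le {c M r : ℝ} (hα : 0 < α) (hβ : α < β)
    (hsum : α / β + α / γ = 1) (hc : 0 < c) (hM : 0 < M) (hr : 0 < r) {n : ℕ} (hn : 0 < n)
    (z : ℕ → ℝ) :
    exp ((∑ k ∈ Finset.range n, |z k|) ^ α / (r * (c * M ^ (1 / γ))) ^ α)
      ≤ exp ((n : ℝ) ^ β / r ^ β) ^ (α / β)
        * (∑ k ∈ Finset.range n, exp (|z k| ^ γ / c ^ γ)) ^ (α / (γ * M)) := by
  have hγ := pos_of_div_add_div_eq_one hα hβ hsum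
  have hne : (Finset.range n).Nonempty := Finset.nonempty_range_iff.2 hn.ne'
  set T := ∑ k ∈ Finset.range n, exp (|z k| ^ γ / c ^ γ)
  obtain ⟨j, hj, hjmax⟩ := Finset.exists_max_image _ (fun k => |z k|) hne
  set W := |z j|
  have hT : 0 < T := Finset.sum_pos (fun _ _ => exp_pos _) hne
  have hSW : ∑ k ∈ Finset.range n, |z k| ≤ n * W := by
    simpa using Finset.sum_le_card_nsmul _ _ _ hjmax
  have hWT : W ^ γ / c ^ γ ≤ log T := (le_log_iff_exp_le hT).2
    (Finset.single_le_sum (f := fun k => exp (|z k| ^ γ / c ^ γ)) (fun _ _ => (exp_pos _).le) hj)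
  have hMγ : 0 < M ^ (1 / γ) := Real.rpow_pos_of_pos hM _
  have hWc : (W / (c * M ^ (1 / γ))) ^ γ = W ^ γ / c ^ γ / M := by
    rw [Real.div_rpow (abs_nonneg _) (by positivity), Real.mul_rpow hc.le hMγ.le,
      ← Real.rpow_mul hM.le, one_div_mul_cancel hγ.ne', Real.rpow_one, div_div]
  have hexp : (∑ k ∈ Finset.range n, |z k|) ^ α / (r * (c * M ^ (1 / γ))) ^ α
      ≤ α / β * ((n : ℝ) ^ β / r ^ β) + α / (γ * M) * log T := calc
    _ = ((∑ k ∈ Finset.range n, |z k|) / (r * (c * M ^ (1 / γ)))) ^ α :=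
        (Real.div_rpow (Finset.sum_nonneg fun _ _ => abs_nonneg _) (by positivity) _).symm
    _ ≤ ((n / r) * (W / (c * M ^ (1 / γ)))) ^ α := by
        rw [div_mul_div_comm]
        gcongr
    _ ≤ α / β * (n / r) ^ β + α / γ * (W / (c * M ^ (1 / γ))) ^ γ :=
        mul_rpow_le_add_rpow (by positivity) (by positivity) hα hβ hsum
    _ = α / β * ((n : ℝ) ^ β / r ^ β) + α / (γ * M) * (W ^ γ / c ^ γ) := by
        rw [Real.div_rpow (Nat.cast_nonneg n) hr.le, hWc]
        field_simp
    _ ≤ _ := by gcongr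
  calc _ ≤ exp (α / β * ((n : ℝ) ^ β / r ^ β) + α / (γ * M) * log T) := exp_le_exp.2 hexp
    _ = _ := by
        rw [exp_add, mul_comm (α / β), Real.exp_mul, mul_comm _ (log T), Real.exp_mul,
          exp_log hT]

theorem expE_top : expE ⊤ = ⊤ := if_pos rfl

theorem expE_ofReal {y : ℝ} (hy : 0 ≤ y) : expE (ENNReal.ofReal y) = ENNReal.ofReal (exp y) := by
  rw [expE, if_neg ENNReal.ofReal_ne_top, ENNReal.toReal_ofReal hy]

theorem measurable_expE : Measurable expE :=
  Measurable.ite (measurableSet_singleton ⊤) measurable_const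
    (ENNReal.measurable_ofReal.comp (Real.measurable_exp.comp ENNReal.measurable_toReal))

theorem expE_sumBefore_le {c M r : ℝ} (hα : 0 < α) (hβ : α < β) (hsum : α / β + α / γ = 1)
    (hc : 0 < c) (hM : 0 < M) (hr : 0 < r) {τ : ℝ≥0∞}
    (hτ : τ ≠ ⊤ → ∃ n : ℕ, 1 ≤ n ∧ τ = n) (z : ℕ → ℝ) :
    expE (sumBefore τ (fun k => ENNReal.ofReal |z k|) ^ α
        / ENNReal.ofReal ((r * (c * M ^ (1 / γ))) ^ α))
      ≤ expE (τ ^ β / ENNReal.ofReal (r ^ β)) ^ (α / β)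
        * sumBefore τ (fun k => ENNReal.ofReal (exp (|z k| ^ γ / c ^ γ))) ^ (α / (γ * M)) := by
  have hγ := pos_of_div_add_div_eq_one hα hβ hsum
  by_cases htop : τ = ⊤
  · have hT : 0 < sumBefore ⊤ (fun k => ENNReal.ofReal (exp (|z k| ^ γ / c ^ γ))) := calc
        (0 : ℝ≥0∞) < ENNReal.ofReal (exp (|z 0| ^ γ / c ^ γ)) := ENNReal.ofReal_pos.2 (exp_pos _)
        _ ≤ _ := by
          refine (ENNReal.le_tsum 0).trans_eq' ?_
          rw [if_pos (ENNReal.natCast_lt_top 0)]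
    rw [htop, ENNReal.top_rpow_of_pos (hα.trans hβ),
      ENNReal.top_div_of_ne_top ENNReal.ofReal_ne_top, expE_top,
      ENNReal.top_rpow_of_pos (div_pos hα (hα.trans hβ)),
      ENNReal.top_mul (ENNReal.rpow_pos_of_nonneg hT (by positivity)).ne']
    exact le_top
  · obtain ⟨n, hn, rfl⟩ := hτ htop
    simp only [sumBefore_natCast]
    rw [← ENNReal.ofReal_sum_of_nonneg fun _ _ => abs_nonneg _,
      ← ENNReal.ofReal_sum_of_nonneg fun _ _ => (exp_pos _).le, ← ENNReal.ofReal_natCast,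
      ENNReal.ofReal_rpow_of_nonneg (Finset.sum_nonneg fun _ _ => abs_nonneg _) hα.le,
      ENNReal.ofReal_rpow_of_nonneg (Nat.cast_nonneg n) (hα.trans hβ).le,
      ← ENNReal.ofReal_div_of_pos (by positivity), ← ENNReal.ofReal_div_of_pos (by positivity),
      expE_ofReal (by positivity), expE_ofReal (by positivity),
      ENNReal.ofReal_rpow_of_pos (exp_pos _),
      ENNReal.ofReal_rpow_of_pos (Finset.sum_pos (fun _ _ => exp_pos _) ⟨0, Finset.mem_range.2 hn⟩),
      ← ENNReal.ofReal_mul (by positivity)]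
    exact ENNReal.ofReal_le_ofReal
      (exp_sum_abs_rpow_div_le hα hβ hsum hc hM hr hn z)

theorem lintegral_rpow_le_rpow_lintegral {Ω : Type*} [MeasurableSpace Ω] {μ : Measure Ω}
    [IsProbabilityMeasure μ] {f : Ω → ℝ≥0∞} (hf : AEMeasurable f μ) {p : ℝ} (hp0 : 0 < p)
    (hp1 : p ≤ 1) :
    ∫⁻ ω, f ω ^ p ∂μ ≤ (∫⁻ ω, f ω ∂μ) ^ p := by
  have h := eLpNorm'_le_eLpNorm'_of_exponent_le hp0 hp1 μ hf.aestronglyMeasurable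
  simp only [eLpNorm', enorm_eq_self, ENNReal.rpow_one, div_one] at h
  calc ∫⁻ ω, f ω ^ p ∂μ = ((∫⁻ ω, f ω ^ p ∂μ) ^ (1 / p)) ^ p := by
        rw [← ENNReal.rpow_mul, one_div_mul_cancel hp0.ne', ENNReal.rpow_one]
    _ ≤ _ := ENNReal.rpow_le_rpow h hp0.le

theorem ofReal_le_two_rpow_max_log (t : ℝ) :
    ENNReal.ofReal t ≤ 2 ^ max (log t / log 2) 1 := by
  rcases le_or_gt t 1 with ht | ht
  · exact (ENNReal.ofReal_le_one.2 ht).trans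
      (ENNReal.one_le_rpow (by norm_num) (by positivity))
  · have h2 : (2 : ℝ) ^ (log t / log 2) = t := by
      rw [Real.rpow_def_of_pos two_pos, mul_div_cancel₀ _ (log_pos one_lt_two).ne',
        exp_log (by linarith)]
    calc ENNReal.ofReal t = ENNReal.ofReal ((2 : ℝ) ^ (log t / log 2)) := by rw [h2]
      _ = 2 ^ (log t / log 2) := by
          rw [← ENNReal.ofReal_rpow_of_pos two_pos, ENNReal.ofReal_ofNat]
      _ ≤ _ := ENNReal.rpow_le_rpow_of_exponent_le (by norm_num) (le_max_left _ _)

theorem lintegral_expE_sumBefore_le_two {Ω : Type*} [MeasurableSpace Ω] {Q : Measure Ω}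
    [IsProbabilityMeasure Q] {τ : Ω → ℝ≥0∞} (hτm : Measurable τ)
    (hτ : ∀ ω, τ ω ≠ ⊤ → ∃ n : ℕ, 1 ≤ n ∧ τ ω = n) {z : ℕ → Ω → ℝ} (hz : ∀ k, Measurable (z k))
    {c M r : ℝ} (hα : 0 < α) (hβ : α < β) (hsum : α / β + α / γ = 1) (hc : 0 < c) (hM : 1 ≤ M)
    (hr : 0 < r) (hτ2 : ∫⁻ ω, expE (τ ω ^ β / ENNReal.ofReal (r ^ β)) ∂Q ≤ 2)
    (hT : ∫⁻ ω, sumBefore (τ ω) (fun k => ENNReal.ofReal (exp (|z k ω| ^ γ / c ^ γ))) ∂Q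
      ≤ 2 ^ M) :
    ∫⁻ ω, expE (sumBefore (τ ω) (fun k => ENNReal.ofReal |z k ω|) ^ α
      / ENNReal.ofReal ((r * (c * M ^ (1 / γ))) ^ α)) ∂Q ≤ 2 := by
  have hβ0 : 0 < β := hα.trans hβ
  have hγ := pos_of_div_add_div_eq_one hα hβ hsum
  have hM0 : 0 < M := one_pos.trans_le hM
  set F : Ω → ℝ≥0∞ := fun ω => expE (τ ω ^ β / ENNReal.ofReal (r ^ β)) ^ (α / β)
  set T : Ω → ℝ≥0∞ := fun ω => sumBefore (τ ω) fun k => ENNReal.ofReal (exp (|z k ω| ^ γ / c ^ γ))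
  have hFm : Measurable F :=
    (measurable_expE.comp ((hτm.pow_const β).div_const _)).pow_const _
  have hTm : Measurable T := measurable_sumBefore hτm fun k =>
    ENNReal.measurable_ofReal.comp (Real.measurable_exp.comp
      (((hz k).abs.pow_const γ).div_const _))
  have hF : ∫⁻ ω, F ω ^ (β / α) ∂Q ≤ 2 := by
    refine (lintegral_congr fun ω => ?_).trans_le hτ2
    rw [← ENNReal.rpow_mul, show α / β * (β / α) = 1 by field_simp, ENNReal.rpow_one]
  have hG : ∫⁻ ω, (T ω ^ (α / (γ * M))) ^ (γ / α) ∂Q ≤ 2 := calc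
    _ = ∫⁻ ω, T ω ^ (1 / M) ∂Q := lintegral_congr fun ω => by
        rw [← ENNReal.rpow_mul]
        congr 1
        field_simp
    _ ≤ (∫⁻ ω, T ω ∂Q) ^ (1 / M) :=
        lintegral_rpow_le_rpow_lintegral hTm.aemeasurable (by positivity)
          ((div_le_one hM0).2 hM)
    _ ≤ (2 ^ M) ^ (1 / M) := ENNReal.rpow_le_rpow hT (by positivity)
    _ = 2 := by rw [← ENNReal.rpow_mul, mul_one_div_cancel hM0.ne', ENNReal.rpow_one]
  calc _ ≤ ∫⁻ ω, (F * fun ω => T ω ^ (α / (γ * M))) ω ∂Q :=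
        lintegral_mono fun ω => expE_sumBefore_le hα hβ hsum hc hM0 hr (hτ ω) _
    _ ≤ (∫⁻ ω, F ω ^ (β / α) ∂Q) ^ (1 / (β / α))
          * (∫⁻ ω, (T ω ^ (α / (γ * M))) ^ (γ / α) ∂Q) ^ (1 / (γ / α)) :=
        ENNReal.lintegral_mul_le_Lp_mul_Lq Q (holderConjugate_div_div hα hβ hsum)
          hFm.aemeasurable (hTm.pow_const _).aemeasurable
    _ ≤ 2 ^ (α / β) * 2 ^ (α / γ) := by
        rw [one_div_div, one_div_div]
        exact mul_le_mul' (ENNReal.rpow_le_rpow hF (by positivity))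
          (ENNReal.rpow_le_rpow hG (by positivity))
    _ = 2 := by
        rw [← ENNReal.rpow_add _ _ two_ne_zero ENNReal.ofNat_ne_top, hsum, ENNReal.rpow_one]

theorem psiNormE_le_mul {Ω : Type*} [MeasurableSpace Ω] (Q : Measure Ω) {X Y : Ω → ℝ≥0∞}
    {c : ℝ} (hc : 0 < c)
    (h : ∀ r, 0 < r → ∫⁻ ω, expE (Y ω ^ β / ENNReal.ofReal (r ^ β)) ∂Q ≤ 2 →
      ∫⁻ ω, expE (X ω ^ α / ENNReal.ofReal ((r * c) ^ α)) ∂Q ≤ 2) :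
    psiNormE Q α X ≤ psiNormE Q β Y * ENNReal.ofReal c := by
  have hc0 : ENNReal.ofReal c ≠ 0 := (ENNReal.ofReal_pos.2 hc).ne'
  conv_rhs => rw [psiNormE, sInf_eq_iInf]
  rw [ENNReal.iInf_mul_of_ne hc0 ENNReal.ofReal_ne_top]
  refine le_iInf fun s => ?_
  rw [ENNReal.iInf_mul_of_ne hc0 ENNReal.ofReal_ne_top]
  refine le_iInf fun ⟨r, hr, hs, hint⟩ => ?_
  rw [hs, ← ENNReal.ofReal_mul hr.le]
  exact sInf_le ⟨r * c, mul_pos hr hc, rfl, h r hr hint⟩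

end Orlicz

theorem stmt_17_general {𝒳 : Type*} [MeasurableSpace 𝒳]
    (κ : Kernel 𝒳 𝒳)
    (Pa : 𝒳 → Measure (ℕ → 𝒳)) [∀ x, IsProbabilityMeasure (Pa x)]
    (hPa_meas : Measurable Pa)
    (hPa : ∀ x, Pa x = (κ x).bind fun y => (Pa y).map (prependPath x))
    (m : ℕ)
    (f : 𝒳 → ℝ) (hf : Measurable f)
    (α β γ c : ℝ) (hα : 0 < α) (hβ : α < β)
    (hγ : γ = α * β / (β - α)) (hc : 0 < c)
    (h : 𝒳 → ℝ)
    (hh : ∀ x, ∫⁻ ω, ENNReal.ofReal (Real.exp (|pathZ m f 0 ω| ^ γ / c ^ γ)) ∂(Pa x)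
        = ENNReal.ofReal (Real.exp (h x)))
    (V : 𝒳 → ℝ) (hVm : Measurable V)
    (C : Set 𝒳) (hC : MeasurableSet C)
    (b K : ℝ) (hVK : ∀ x ∈ C, V x ≤ K)
    (hdrift : ∀ x, (∫⁻ ω, ENNReal.ofReal (V (ω m)) ∂(Pa x)) +
          ENNReal.ofReal (Real.exp (h x))
        ≤ ENNReal.ofReal (V x + b * Set.indicator C (fun _ => 1) x)) :
    (⨆ x ∈ C, psiNormE (Pa x) α
        (fun ω => sumBefore (pathTau m C ω) fun k => ENNReal.ofReal |pathZ m f k ω|))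
      ≤ (⨆ x ∈ C, psiNormE (Pa x) β (fun ω => pathTau m C ω)) *
          ENNReal.ofReal (c * (max (Real.log (b + K) / Real.log 2) 1) ^ (1 / γ)) := by
  have hsum : α / β + α / γ = 1 := by
    have : β - α ≠ 0 := (sub_pos.2 hβ).ne'
    have : β ≠ 0 := (hα.trans hβ).ne'
    rw [hγ]
    field_simp
    ring
  set M := max (log (b + K) / log 2) 1
  have hT (x : 𝒳) (hx : x ∈ C) : ∫⁻ ω, sumBefore (pathTau m C ω)
      (fun k => ENNReal.ofReal (exp (|pathZ m f k ω| ^ γ / c ^ γ))) ∂Pa x ≤ 2 ^ M := by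
    refine (lintegral_sumBefore_exp_le hPa_meas hPa hf hh hVm hC hdrift x).trans
      ((ENNReal.ofReal_le_ofReal ?_).trans (ofReal_le_two_rpow_max_log _))
    rw [Set.indicator_of_mem hx]
    linarith [hVK x hx]
  refine iSup₂_le fun x hx => ?_
  calc _ ≤ psiNormE (Pa x) β (pathTau m C) * ENNReal.ofReal (c * M ^ (1 / γ)) :=
        psiNormE_le_mul _ (by positivity) fun r hr hτ =>
          lintegral_expE_sumBefore_le_two (measurable_pathTau m hC)
            (fun _ => exists_pathTau_eq_natCast) (measurable_pathZ m hf) hα hβ hsum hc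
            (le_max_right _ _) hr hτ (hT x hx)
    _ ≤ _ := mul_le_mul_left
        (le_iSup₂ (f := fun x _ => psiNormE (Pa x) β fun ω => pathTau m C ω) x hx) _

/-- Regular drift condition: if `h(x) = log E_x exp(c^{−γ}|Z_0(f)|^γ)` with
`γ = αβ/(β−α)` and `(P^m V)(x) − V(x) ≤ −e^{h(x)} + b 1_C(x)`, `V ≤ K` on `C`, then
`sup_{x∈C} ‖Σ_{k<τ_C} |Z_k(f)|‖_{ψ_α,P_x} ≤ c₁ c₂`, where
`c₁ = sup_{x∈C} ‖τ_C‖_{ψ_β,P_x}` and `c₂ = c (max(log(b+K)/log 2, 1))^{1/γ}`,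
the inequality interpreted in `[0,∞]`.  Here `Pa x` is the Ionescu–Tulcea path measure
of the canonical chain started at `x`, characterized by the recursion `hPa`. -/
theorem stmt_17 {𝒳 : Type*} [MeasurableSpace 𝒳]
    (κ : Kernel 𝒳 𝒳) [IsMarkovKernel κ]
    (Pa : 𝒳 → Measure (ℕ → 𝒳)) [∀ x, IsProbabilityMeasure (Pa x)]
    (hPa_meas : Measurable Pa)
    (hPa : ∀ x, Pa x = (κ x).bind fun y => (Pa y).map (prependPath x))
    (m : ℕ) (hm : 1 ≤ m)
    (f : 𝒳 → ℝ) (hf : Measurable f)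
    (α β γ c : ℝ) (hα : 0 < α) (hα1 : α ≤ 1) (hβ : α < β)
    (hγ : γ = α * β / (β - α)) (hc : 0 < c)
    (h : 𝒳 → ℝ) (hhm : Measurable h)
    (hh : ∀ x, ∫⁻ ω, ENNReal.ofReal (Real.exp (|pathZ m f 0 ω| ^ γ / c ^ γ)) ∂(Pa x)
        = ENNReal.ofReal (Real.exp (h x)))
    (V : 𝒳 → ℝ) (hVm : Measurable V) (hV0 : ∀ x, 0 ≤ V x)
    (C : Set 𝒳) (hC : MeasurableSet C)
    (b K : ℝ) (hb : 0 < b) (hK : 0 < K) (hVK : ∀ x ∈ C, V x ≤ K)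
    (hdrift : ∀ x, (∫⁻ ω, ENNReal.ofReal (V (ω m)) ∂(Pa x)) +
          ENNReal.ofReal (Real.exp (h x))
        ≤ ENNReal.ofReal (V x + b * Set.indicator C (fun _ => 1) x)) :
    (⨆ x ∈ C, psiNormE (Pa x) α
        (fun ω => sumBefore (pathTau m C ω) fun k => ENNReal.ofReal |pathZ m f k ω|))
      ≤ (⨆ x ∈ C, psiNormE (Pa x) β (fun ω => pathTau m C ω)) *
          ENNReal.ofReal (c * (max (Real.log (b + K) / Real.log 2) 1) ^ (1 / γ)) :=
  stmt_17_general κ Pa hPa_meas hPa m f hf α β γ c hα hβ hγ hc h hh V hVm C hC b K hVK hdrift
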